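/- Let f(x_1,…,x_n) be a homogeneous symmetric polynomial of degree m in n variables whose expansion in Schur polynomials, f = Σ_{λ ⊢ m} d_λ s_λ(x_1,…,x_n), has nonnegative integer coefficients d_λ. Suppose gcd(m, n) = 1 and let ξ ∈ ℂ be a primitive n-th root of unity. Then for every integer k not divisible by n, f(1, ξ^k, ξ^{2k}, …, ξ^{(n−1)k}) = 0. -/

import Mathlib

open Finset Polynomial

/-- The cells of the skew shape `λ/μ`. -/
def skewCells (lam mu : YoungDiagram) : Finset (ℕ × ℕ) :=
  lam.cells \ mu.cells

/-- A semistandard Young tableau of skew shape `λ/μ`: a filling of the cells of `λ/μ`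
with positive integers, weakly increasing along rows and strictly increasing down columns.
Cells outside the shape carry the value `0`. -/
structure SkewSSYT (lam mu : YoungDiagram) where
  entry : ℕ → ℕ → ℕ
  pos' : ∀ i j, (i, j) ∈ skewCells lam mu → 0 < entry i j
  zeros' : ∀ i j, (i, j) ∉ skewCells lam mu → entry i j = 0
  row_weak' : ∀ i j1 j2, j1 < j2 → (i, j1) ∈ skewCells lam mu →
    (i, j2) ∈ skewCells lam mu → entry i j1 ≤ entry i j2
  col_strict' : ∀ i1 i2 j, i1 < i2 → (i1, j) ∈ skewCells lam mu →
    (i2, j) ∈ skewCells lam mu → entry i1 j < entry i2 j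

/-- `w_k(T)`: the number of entries of `T` equal to `k`. -/
def SkewSSYT.wt {lam mu : YoungDiagram} (T : SkewSSYT lam mu) (k : ℕ) : ℕ :=
  ((skewCells lam mu).filter fun c => T.entry c.1 c.2 = k).card

/-- `SSYT(λ/μ, n)`: semistandard skew tableaux of shape `λ/μ` with all entries at most `n`. -/
def SSYTbdd (lam mu : YoungDiagram) (n : ℕ) : Set (SkewSSYT lam mu) :=
  {T | ∀ i j, (i, j) ∈ skewCells lam mu → T.entry i j ≤ n}

/-- `SSYT(λ/μ, α)`: semistandard skew tableaux of shape `λ/μ` with exactly `α i`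
entries equal to `i + 1` for each `i : Fin n` (so content `α`, entries in `{1, …, n}`). -/
def SSYTcontent (lam mu : YoungDiagram) {n : ℕ} (α : Fin n → ℕ) : Set (SkewSSYT lam mu) :=
  {T | (∀ i : Fin n, T.wt ((i : ℕ) + 1) = α i) ∧
    ∀ i j, (i, j) ∈ skewCells lam mu → T.entry i j ≤ n}

/-- The cyclic shift `cyc_r(α)`, with `cyc r α i = α ((i + r) mod n)`. -/
def cyc {n : ℕ} (r : ℕ) (α : Fin n → ℕ) : Fin n → ℕ :=
  fun i => α ⟨((i : ℕ) + r) % n, Nat.mod_lt _ i.pos⟩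

/-- `z_r = Σ_j j ⬝ α_{j+r}` (indices mod `n`): the weighted sum of the shifted composition. -/
def zwt {n : ℕ} (α : Fin n → ℕ) (r : ℕ) : ℕ :=
  ∑ j : Fin n, ((j : ℕ) + 1) * cyc r α j

/-- `Σ_{j=1}^n j ⬝ w_j(T)`. -/
def weightedSum {lam mu : YoungDiagram} (n : ℕ) (T : SkewSSYT lam mu) : ℕ :=
  ∑ j : Fin n, ((j : ℕ) + 1) * T.wt ((j : ℕ) + 1)

/-- The (skew) Schur polynomial `s_{λ/μ}(x_1, …, x_n)` evaluated at `x`. -/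
noncomputable def skewSchurEval (lam mu : YoungDiagram) (n : ℕ) {R : Type*} [CommSemiring R]
    (x : Fin n → R) : R :=
  ∑ᶠ T ∈ SSYTbdd lam mu n, ∏ i : Fin n, x i ^ T.wt ((i : ℕ) + 1)

/-- `n(λ) = Σ_j (j - 1) λ_j`, i.e. the sum of the (0-indexed) row indices of the cells. -/
def nStat (lam : YoungDiagram) : ℕ :=
  ∑ c ∈ lam.cells, c.1

/-! Bender–Knuth involutions make every Schur polynomial `s_λ` symmetric, and `s_λ` is
homogeneous of degree `|λ|`. With `ζ = ξ ^ k` the point `x = (1, ζ, …, ζ ^ (n - 1))` satisfies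
`x ∘ finRotate n = ζ • x` because `ζ ^ n = 1`, so `s_λ(x) = ζ ^ |λ| • s_λ(x)`. Since `n ∤ k m`,
`ζ ^ m ≠ 1`, and every `s_λ` with `|λ| = m` vanishes at `x`. -/

theorem Finset.card_filter_card_filter_lt_lt {α : Type*} [LinearOrder α] (s : Finset α) {t : ℕ}
    (ht : t ≤ #s) : #{a ∈ s | #{b ∈ s | b < a} < t} = t := by
  obtain ⟨k, hk⟩ : ∃ k, #s = k := ⟨_, rfl⟩
  set e := s.orderEmbOfFin hk
  have hs : s = univ.map e.toEmbedding := (map_orderEmbOfFin_univ s hk).symm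
  have rank_e (i : Fin k) : #{b ∈ s | b < e i} = i := by
    rw [hs, filter_map, card_map]
    simp only [Function.comp_def, RelEmbedding.coe_toEmbedding, e.lt_iff_lt, filter_gt_eq_Iio,
      Fin.card_Iio]
  calc #{a ∈ s | #{b ∈ s | b < a} < t}
      = #{a ∈ univ.map e.toEmbedding | #{b ∈ s | b < a} < t} := by rw [← hs]
    _ = #{i : Fin k | (i : ℕ) < t} := by
      simp only [filter_map, card_map, Function.comp_def, RelEmbedding.coe_toEmbedding, rank_e]
    _ = t := by rw [Fin.card_filter_val_lt, ← hk, min_eq_right ht]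

theorem pow_val_finRotate {M : Type*} [Monoid M] {ζ : M} {n : ℕ} (hζ : ζ ^ n = 1) (i : Fin n) :
    ζ ^ (finRotate n i : ℕ) = ζ * ζ ^ (i : ℕ) := by
  have := i.neZero
  rw [finRotate_apply, Fin.val_add, ← pow_eq_pow_mod _ hζ, Fin.val_one', pow_add,
    ← pow_eq_pow_mod _ hζ, pow_one, ← pow_succ, pow_succ']

lemma mem_skewCells_bot {lam : YoungDiagram} {c : ℕ × ℕ} : c ∈ skewCells lam ⊥ ↔ c ∈ lam := by
  simp [skewCells, YoungDiagram.mem_cells]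

lemma skewCells_bot (lam : YoungDiagram) : skewCells lam ⊥ = lam.cells := by
  ext c
  rw [mem_skewCells_bot, YoungDiagram.mem_cells]

namespace SkewSSYT

@[ext]
lemma ext {lam mu : YoungDiagram} {T U : SkewSSYT lam mu} (h : T.entry = U.entry) : T = U := by
  cases T; cases U; cases h; rfl

variable {lam : YoungDiagram} (T : SkewSSYT lam ⊥)

lemma mem_of_entry_pos {r j : ℕ} (h : 0 < T.entry r j) : (r, j) ∈ lam := by
  by_contra hc
  rw [T.zeros' r j (mt mem_skewCells_bot.mp hc)] at h
  exact lt_irrefl 0 h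

lemma row_weak_of_le {r j1 j2 : ℕ} (h : j1 ≤ j2) (hm : (r, j2) ∈ lam) :
    T.entry r j1 ≤ T.entry r j2 := by
  rcases h.eq_or_lt with rfl | h
  · exact le_rfl
  · exact T.row_weak' r j1 j2 h (mem_skewCells_bot.mpr (lam.up_left_mem le_rfl h.le hm))
      (mem_skewCells_bot.mpr hm)

lemma col_strict {r1 r2 j : ℕ} (h : r1 < r2) (hm : (r2, j) ∈ lam) :
    T.entry r1 j < T.entry r2 j :=
  T.col_strict' r1 r2 j h (mem_skewCells_bot.mpr (lam.up_left_mem h.le le_rfl hm))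
    (mem_skewCells_bot.mpr hm)

lemma wt_eq_card_filter (w : ℕ) : T.wt w = #{c ∈ lam.cells | T.entry c.1 c.2 = w} := by
  rw [wt, skewCells_bot]

lemma sum_wt_eq_card {n : ℕ} (hT : T ∈ SSYTbdd lam ⊥ n) :
    ∑ i : Fin n, T.wt ((i : ℕ) + 1) = lam.card := by
  classical
  have bounds (c : ℕ × ℕ) (hc : c ∈ lam.cells) : 0 < T.entry c.1 c.2 ∧ T.entry c.1 c.2 ≤ n :=
    ⟨T.pos' _ _ (by rwa [skewCells_bot]), hT _ _ (by rwa [skewCells_bot])⟩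
  rw [YoungDiagram.card, card_eq_sum_card_fiberwise (f := fun c => T.entry c.1 c.2 - 1)
    (t := range n) fun c hc => mem_range.mpr (by dsimp only; have := bounds c hc; omega),
    ← Fin.sum_univ_eq_sum_range]
  refine sum_congr rfl fun i _ => ?_
  rw [wt_eq_card_filter]
  refine congrArg card (filter_congr fun c hc => ?_)
  have := bounds c hc
  omega

end SkewSSYT

namespace BenderKnuth

variable {lam : YoungDiagram} (T : SkewSSYT lam ⊥) (v : ℕ)

/- The involution `T.benderKnuth v` exchanges the entries `v + 1` and `v + 2`, i.e. the variables
`x v` and `x (v + 1)` of `Fin n`. A `v + 1` directly above a `v + 2` is left alone; the remaining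
("free") cells holding `v + 1` or `v + 2` form, in each row, `a` copies of `v + 1` followed by
`b` copies of `v + 2`, and are refilled by `b` copies of `v + 1` followed by `a` copies
of `v + 2`. -/
def IsFree (r j : ℕ) : Prop :=
  (r, j) ∈ lam ∧
    (T.entry r j = v + 1 ∧ T.entry (r + 1) j ≠ v + 2 ∨
     T.entry r j = v + 2 ∧ T.entry (r - 1) j ≠ v + 1)

instance (r j : ℕ) : Decidable (IsFree T v r j) := by
  unfold IsFree; infer_instance

def rowFree (r : ℕ) : Finset ℕ := {j ∈ range (lam.rowLen r) | IsFree T v r j}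

def numLow (r : ℕ) : ℕ := #{j ∈ rowFree T v r | T.entry r j = v + 1}

def numHigh (r : ℕ) : ℕ := #{j ∈ rowFree T v r | T.entry r j = v + 2}

def rank (r j : ℕ) : ℕ := #{j' ∈ rowFree T v r | j' < j}

def newEntry (r j : ℕ) : ℕ :=
  if IsFree T v r j then (if rank T v r j < numHigh T v r then v + 1 else v + 2)
  else T.entry r j

variable {T v} {r j : ℕ}

lemma IsFree.mem (h : IsFree T v r j) : (r, j) ∈ lam := h.1

lemma IsFree.entry_eq (h : IsFree T v r j) : T.entry r j = v + 1 ∨ T.entry r j = v + 2 :=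
  h.2.imp And.left And.left

lemma mem_rowFree : j ∈ rowFree T v r ↔ IsFree T v r j := by
  simp only [rowFree, mem_filter, mem_range, and_iff_right_iff_imp]
  exact fun h => YoungDiagram.mem_iff_lt_rowLen.mp h.mem

lemma mem_of_entry_eq_succ {w : ℕ} (h : T.entry r j = w + 1) : (r, j) ∈ lam :=
  T.mem_of_entry_pos (by omega)

lemma IsFree.entry_below (h : IsFree T v r j) :
    T.entry (r + 1) j ≠ v + 1 ∧ T.entry (r + 1) j ≠ v + 2 := by
  have hlt (w : ℕ) (hw : T.entry (r + 1) j = w + 1) : T.entry r j < T.entry (r + 1) j :=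
    T.col_strict (lt_add_one r) (mem_of_entry_eq_succ hw)
  constructor <;> intro hb
  · have := hlt v hb
    rcases h.entry_eq with he | he <;> omega
  · have := hlt (v + 1) hb
    rcases h.2 with ⟨he, hne⟩ | ⟨he, _⟩ <;> omega

lemma IsFree.entry_above (hr : 0 < r) (h : IsFree T v r j) :
    T.entry (r - 1) j ≠ v + 1 ∧ T.entry (r - 1) j ≠ v + 2 := by
  have := T.col_strict (Nat.sub_lt hr one_pos) h.mem
  constructor <;> intro ha
  · rcases h.2 with ⟨he, _⟩ | ⟨he, hne⟩ <;> omega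
  · rcases h.entry_eq with he | he <;> omega

lemma entry_below_of_not_isFree (hm : (r, j) ∈ lam) (he : T.entry r j = v + 1)
    (h : ¬ IsFree T v r j) : T.entry (r + 1) j = v + 2 := by
  by_contra hb
  exact h ⟨hm, .inl ⟨he, hb⟩⟩

-- `r - 1` truncates at `r = 0`, where the second disjunct of `IsFree` compares the cell with
-- itself.
lemma entry_above_of_not_isFree (hm : (r, j) ∈ lam) (he : T.entry r j = v + 2)
    (h : ¬ IsFree T v r j) : 0 < r ∧ T.entry (r - 1) j = v + 1 := by
  have ha : T.entry (r - 1) j = v + 1 := by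
    by_contra ha
    exact h ⟨hm, .inr ⟨he, ha⟩⟩
  refine ⟨Nat.pos_of_ne_zero fun hr => ?_, ha⟩
  subst hr
  rw [Nat.zero_sub] at ha
  omega

lemma rank_lt_numLow (h : IsFree T v r j) (he : T.entry r j = v + 1) :
    rank T v r j < numLow T v r := by
  refine card_lt_card ((ssubset_iff_of_subset fun j' hj' => ?_).mpr
    ⟨j, mem_filter.mpr ⟨mem_rowFree.mpr h, he⟩, by simp⟩)
  obtain ⟨hj'free, hlt⟩ := mem_filter.mp hj'
  have := T.row_weak_of_le hlt.le h.mem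
  have := (mem_rowFree.mp hj'free).entry_eq
  exact mem_filter.mpr ⟨hj'free, by omega⟩

lemma numLow_le_rank (he : T.entry r j = v + 2) :
    numLow T v r ≤ rank T v r j := by
  refine card_le_card fun j' hj' => ?_
  obtain ⟨hj'free, he'⟩ := mem_filter.mp hj'
  refine mem_filter.mpr ⟨hj'free, lt_of_not_ge fun hle => ?_⟩
  have := T.row_weak_of_le hle (mem_rowFree.mp hj'free).mem
  omega

lemma rank_mono {j1 j2 : ℕ} (h : j1 ≤ j2) : rank T v r j1 ≤ rank T v r j2 :=
  card_le_card (monotone_filter_right _ fun _ _ hlt => hlt.trans_le h)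

lemma numLow_add_numHigh : numLow T v r + numHigh T v r = #(rowFree T v r) := by
  rw [numLow, numHigh, ← card_filter_add_card_filter_not (s := rowFree T v r)
    (fun j => T.entry r j = v + 1)]
  congr 2
  refine filter_congr fun j hj => ?_
  have := (mem_rowFree.mp hj).entry_eq
  omega

lemma card_filter_rank_lt :
    #{j ∈ rowFree T v r | rank T v r j < numHigh T v r} = numHigh T v r :=
  card_filter_card_filter_lt_lt _ (card_filter_le _ _)

lemma card_filter_not_rank_lt :
    #{j ∈ rowFree T v r | ¬ rank T v r j < numHigh T v r} = numLow T v r := by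
  have := card_filter_add_card_filter_not (s := rowFree T v r)
    (fun j => rank T v r j < numHigh T v r)
  rw [card_filter_rank_lt, ← numLow_add_numHigh] at this
  omega

lemma newEntry_of_isFree (h : IsFree T v r j) :
    newEntry T v r j = if rank T v r j < numHigh T v r then v + 1 else v + 2 :=
  if_pos h

lemma newEntry_of_not_isFree (h : ¬ IsFree T v r j) : newEntry T v r j = T.entry r j :=
  if_neg h

lemma add_two_le_entry_of_isFree_of_not_isFree {j1 j2 : ℕ} (hj : j1 ≤ j2) (hm : (r, j2) ∈ lam)
    (h1 : IsFree T v r j1) (h2 : ¬ IsFree T v r j2) : v + 2 ≤ T.entry r j2 := by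
  have hle := T.row_weak_of_le hj hm
  by_contra hlt
  have he1 : T.entry r j1 = v + 1 := by rcases h1.entry_eq with he1 | he1 <;> omega
  have hb := entry_below_of_not_isFree hm (by omega) h2
  have hb1 := T.row_weak_of_le hj (mem_of_entry_eq_succ hb)
  have hcol := T.col_strict (lt_add_one r) (lam.up_left_mem le_rfl hj (mem_of_entry_eq_succ hb))
  have := h1.entry_below
  omega

lemma entry_le_add_one_of_not_isFree_of_isFree {j1 j2 : ℕ} (hj : j1 ≤ j2) (hm : (r, j2) ∈ lam)
    (h1 : ¬ IsFree T v r j1) (h2 : IsFree T v r j2) : T.entry r j1 ≤ v + 1 := by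
  have hle := T.row_weak_of_le hj hm
  by_contra hlt
  have he2 : T.entry r j2 = v + 2 := by rcases h2.entry_eq with he2 | he2 <;> omega
  obtain ⟨hr, ha⟩ := entry_above_of_not_isFree (lam.up_left_mem le_rfl hj hm) (by omega) h1
  have ha1 := T.row_weak_of_le hj (lam.up_left_mem (Nat.sub_le r 1) le_rfl hm)
  have hcol := T.col_strict (Nat.sub_lt hr one_pos) hm
  have := h2.entry_above hr
  omega

lemma newEntry_row_weak {j1 j2 : ℕ} (hj : j1 ≤ j2) (hm : (r, j2) ∈ lam) :
    newEntry T v r j1 ≤ newEntry T v r j2 := by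
  by_cases h1 : IsFree T v r j1 <;> by_cases h2 : IsFree T v r j2
  · have := rank_mono (T := T) (v := v) (r := r) hj
    rw [newEntry_of_isFree h1, newEntry_of_isFree h2]
    split_ifs <;> omega
  · have := add_two_le_entry_of_isFree_of_not_isFree hj hm h1 h2
    rw [newEntry_of_isFree h1, newEntry_of_not_isFree h2]
    split_ifs <;> omega
  · have := entry_le_add_one_of_not_isFree_of_isFree hj hm h1 h2
    rw [newEntry_of_not_isFree h1, newEntry_of_isFree h2]
    split_ifs <;> omega
  · rw [newEntry_of_not_isFree h1, newEntry_of_not_isFree h2]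
    exact T.row_weak_of_le hj hm

lemma newEntry_lt_newEntry_succ (hm : (r + 1, j) ∈ lam) :
    newEntry T v r j < newEntry T v (r + 1) j := by
  have hcol := T.col_strict (lt_add_one r) hm
  by_cases h1 : IsFree T v r j
  · have := h1.entry_below
    have := h1.entry_eq
    have h2 : ¬ IsFree T v (r + 1) j := fun h2 => by rcases h2.entry_eq with h | h <;> omega
    rw [newEntry_of_isFree h1, newEntry_of_not_isFree h2]
    split_ifs <;> omega
  · by_cases h2 : IsFree T v (r + 1) j
    · have ha := h2.entry_above (Nat.add_one_pos r)
      rw [Nat.add_sub_cancel] at ha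
      have := h2.entry_eq
      rw [newEntry_of_not_isFree h1, newEntry_of_isFree h2]
      split_ifs <;> omega
    · rw [newEntry_of_not_isFree h1, newEntry_of_not_isFree h2]
      exact hcol

lemma newEntry_col_strict {r1 r2 : ℕ} (h : r1 < r2) (hm : (r2, j) ∈ lam) :
    newEntry T v r1 j < newEntry T v r2 j := by
  induction r2, h using Nat.le_induction with
  | base => exact newEntry_lt_newEntry_succ hm
  | succ r2 _ ih =>
    exact (ih (lam.up_left_mem r2.le_succ le_rfl hm)).trans (newEntry_lt_newEntry_succ hm)

def _root_.SkewSSYT.benderKnuth (T : SkewSSYT lam ⊥) (v : ℕ) : SkewSSYT lam ⊥ where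
  entry := newEntry T v
  pos' r j hm := by
    by_cases h : IsFree T v r j
    · rw [newEntry_of_isFree h]
      split_ifs <;> omega
    · rw [newEntry_of_not_isFree h]
      exact T.pos' r j hm
  zeros' r j hm := by
    rw [newEntry_of_not_isFree fun h => hm (mem_skewCells_bot.mpr h.mem)]
    exact T.zeros' r j hm
  row_weak' _ _ _ hj _ hm := newEntry_row_weak hj.le (mem_skewCells_bot.mp hm)
  col_strict' _ _ _ h _ hm := newEntry_col_strict h (mem_skewCells_bot.mp hm)

lemma benderKnuth_entry : (T.benderKnuth v).entry = newEntry T v := rfl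

lemma benderKnuth_mem_SSYTbdd {n : ℕ} (hn : v + 2 ≤ n) (hT : T ∈ SSYTbdd lam ⊥ n) :
    T.benderKnuth v ∈ SSYTbdd lam ⊥ n := by
  intro r j hm
  rw [benderKnuth_entry]
  by_cases h : IsFree T v r j
  · rw [newEntry_of_isFree h]
    split_ifs <;> omega
  · rw [newEntry_of_not_isFree h]
    exact hT r j hm

lemma isFree_benderKnuth_of_isFree (h : IsFree T v r j) : IsFree (T.benderKnuth v) v r j := by
  have not_isFree {r' : ℕ} (h1 : T.entry r' j ≠ v + 1) (h2 : T.entry r' j ≠ v + 2) :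
      ¬ IsFree T v r' j := fun h' => by rcases h'.entry_eq with h'' | h'' <;> contradiction
  refine ⟨h.mem, ?_⟩
  simp only [benderKnuth_entry, newEntry_of_isFree h]
  split_ifs with hlt
  · obtain ⟨h1, h2⟩ := h.entry_below
    exact .inl ⟨rfl, by rwa [newEntry_of_not_isFree (not_isFree h1 h2)]⟩
  · refine .inr ⟨rfl, ?_⟩
    rcases r.eq_zero_or_pos with rfl | hr
    · rw [Nat.zero_sub, newEntry_of_isFree h, if_neg hlt]
      omega
    · obtain ⟨h1, h2⟩ := h.entry_above hr
      rwa [newEntry_of_not_isFree (not_isFree h1 h2)]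

lemma not_isFree_benderKnuth_of_not_isFree (h : ¬ IsFree T v r j) :
    ¬ IsFree (T.benderKnuth v) v r j := by
  rintro ⟨hm, hf⟩
  simp only [benderKnuth_entry, newEntry_of_not_isFree h] at hf
  rcases hf with ⟨he, hb⟩ | ⟨he, ha⟩
  · have hbelow : ¬ IsFree T v (r + 1) j := fun h' =>
      (h'.entry_above (Nat.add_one_pos r)).1 (by rwa [Nat.add_sub_cancel])
    rw [newEntry_of_not_isFree hbelow, entry_below_of_not_isFree hm he h] at hb
    exact hb rfl
  · obtain ⟨hr, habove⟩ := entry_above_of_not_isFree hm he h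
    have hfa : ¬ IsFree T v (r - 1) j := fun h' =>
      h'.entry_below.2 (by rwa [Nat.sub_add_cancel hr])
    rw [newEntry_of_not_isFree hfa, habove] at ha
    exact ha rfl

lemma isFree_benderKnuth_iff : IsFree (T.benderKnuth v) v r j ↔ IsFree T v r j :=
  ⟨not_imp_not.mp not_isFree_benderKnuth_of_not_isFree, isFree_benderKnuth_of_isFree⟩

lemma rowFree_benderKnuth : rowFree (T.benderKnuth v) v r = rowFree T v r :=
  filter_congr fun _ _ => isFree_benderKnuth_iff

lemma rank_benderKnuth : rank (T.benderKnuth v) v r j = rank T v r j := by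
  rw [rank, rank, rowFree_benderKnuth]

lemma numHigh_benderKnuth : numHigh (T.benderKnuth v) v r = numLow T v r := by
  rw [numHigh, rowFree_benderKnuth, ← card_filter_not_rank_lt]
  congr 1
  refine filter_congr fun j hj => ?_
  rw [benderKnuth_entry, newEntry_of_isFree (mem_rowFree.mp hj)]
  split_ifs <;> simp [*]

@[simp]
lemma benderKnuth_benderKnuth : (T.benderKnuth v).benderKnuth v = T := by
  ext r j
  change newEntry (T.benderKnuth v) v r j = T.entry r j
  by_cases h : IsFree T v r j
  · rw [newEntry_of_isFree (isFree_benderKnuth_iff.mpr h), rank_benderKnuth, numHigh_benderKnuth]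
    rcases h.entry_eq with he | he
    · rw [if_pos (rank_lt_numLow h he), he]
    · rw [if_neg (numLow_le_rank he).not_gt, he]
  · rw [newEntry_of_not_isFree (not_isFree_benderKnuth_of_not_isFree h), benderKnuth_entry,
      newEntry_of_not_isFree h]

lemma card_filter_isFree (Q : ℕ → ℕ → Prop) [∀ r j, Decidable (Q r j)] :
    #{c ∈ lam.cells | IsFree T v c.1 c.2 ∧ Q c.1 c.2}
      = ∑ r ∈ lam.cells.image Prod.fst, #{j ∈ rowFree T v r | Q r j} := by
  rw [card_eq_sum_card_fiberwise fun c hc => mem_image_of_mem Prod.fst (filter_subset _ _ hc)]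
  refine sum_congr rfl fun r _ => card_nbij' Prod.snd (fun j => (r, j)) ?_ ?_ ?_ ?_
  · intro c hc
    simp only [mem_coe, mem_filter, YoungDiagram.mem_cells] at hc ⊢
    obtain ⟨⟨-, hfree, hQ⟩, rfl⟩ := hc
    exact ⟨mem_rowFree.mpr hfree, hQ⟩
  · intro j hj
    simp only [mem_coe, mem_filter, YoungDiagram.mem_cells, mem_rowFree, and_true] at hj ⊢
    exact ⟨hj.1.mem, hj⟩
  · intro c hc
    simp only [mem_coe, mem_filter] at hc
    exact Prod.ext hc.2.symm rfl
  · intro j _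
    rfl

lemma card_filter_not_isFree_entry_eq :
    #{c ∈ lam.cells | ¬ IsFree T v c.1 c.2 ∧ T.entry c.1 c.2 = v + 1}
      = #{c ∈ lam.cells | ¬ IsFree T v c.1 c.2 ∧ T.entry c.1 c.2 = v + 2} := by
  refine card_nbij' (fun c => (c.1 + 1, c.2)) (fun c => (c.1 - 1, c.2)) ?_ ?_ ?_ ?_
  · rintro ⟨r, j⟩ hc
    simp only [mem_coe, mem_filter, YoungDiagram.mem_cells] at hc ⊢
    obtain ⟨hm, hnf, he⟩ := hc
    have hb := entry_below_of_not_isFree hm he hnf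
    refine ⟨mem_of_entry_eq_succ hb, fun hf => ?_, hb⟩
    exact (hf.entry_above (Nat.add_one_pos r)).1 (by rwa [Nat.add_sub_cancel])
  · rintro ⟨r, j⟩ hc
    simp only [mem_coe, mem_filter, YoungDiagram.mem_cells] at hc ⊢
    obtain ⟨hm, hnf, he⟩ := hc
    obtain ⟨hr, ha⟩ := entry_above_of_not_isFree hm he hnf
    refine ⟨lam.up_left_mem (Nat.sub_le r 1) le_rfl hm, fun hf => ?_, ha⟩
    exact hf.entry_below.2 (by rwa [Nat.sub_add_cancel hr])
  · rintro ⟨r, j⟩ _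
    simp
  · rintro ⟨r, j⟩ hc
    simp only [mem_coe, mem_filter, YoungDiagram.mem_cells] at hc
    obtain ⟨hm, hnf, he⟩ := hc
    simp [Nat.sub_add_cancel (entry_above_of_not_isFree hm he hnf).1]

lemma wt_eq_card_isFree_add_card_not_isFree (U : SkewSSYT lam ⊥) (w : ℕ) :
    U.wt w = #{c ∈ lam.cells | IsFree T v c.1 c.2 ∧ U.entry c.1 c.2 = w}
      + #{c ∈ lam.cells | ¬ IsFree T v c.1 c.2 ∧ U.entry c.1 c.2 = w} := by
  rw [U.wt_eq_card_filter, ← card_filter_add_card_filter_not (fun c => IsFree T v c.1 c.2),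
    filter_filter, filter_filter]
  simp only [and_comm]

lemma wt_benderKnuth_low : (T.benderKnuth v).wt (v + 1) = T.wt (v + 2) := by
  rw [wt_eq_card_isFree_add_card_not_isFree (T := T),
    wt_eq_card_isFree_add_card_not_isFree (T := T), ← card_filter_not_isFree_entry_eq]
  congr 1
  · calc #{c ∈ lam.cells | IsFree T v c.1 c.2 ∧ (T.benderKnuth v).entry c.1 c.2 = v + 1}
        = #{c ∈ lam.cells | IsFree T v c.1 c.2 ∧ rank T v c.1 c.2 < numHigh T v c.1} := by
          refine congrArg card (filter_congr fun c _ => and_congr_right fun h => ?_)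
          rw [benderKnuth_entry, newEntry_of_isFree h]
          split_ifs <;> simp [*]
      _ = ∑ r ∈ lam.cells.image Prod.fst, numHigh T v r := by
          rw [card_filter_isFree (fun r j => rank T v r j < numHigh T v r)]
          exact sum_congr rfl fun r _ => card_filter_rank_lt
      _ = #{c ∈ lam.cells | IsFree T v c.1 c.2 ∧ T.entry c.1 c.2 = v + 2} :=
          (card_filter_isFree (fun r j => T.entry r j = v + 2)).symm
  · refine congrArg card (filter_congr fun c _ => and_congr_right fun h => ?_)
    rw [benderKnuth_entry, newEntry_of_not_isFree h]

lemma wt_benderKnuth_high : (T.benderKnuth v).wt (v + 2) = T.wt (v + 1) := by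
  simpa using (wt_benderKnuth_low (T := T.benderKnuth v) (v := v)).symm

lemma wt_benderKnuth_of_ne {w : ℕ} (h1 : w ≠ v + 1) (h2 : w ≠ v + 2) :
    (T.benderKnuth v).wt w = T.wt w := by
  rw [SkewSSYT.wt_eq_card_filter, SkewSSYT.wt_eq_card_filter]
  refine congrArg card (filter_congr fun c _ => ?_)
  rw [benderKnuth_entry]
  by_cases h : IsFree T v c.1 c.2
  · have := h.entry_eq
    rw [newEntry_of_isFree h]
    split_ifs <;> omega
  · rw [newEntry_of_not_isFree h]

lemma wt_swap_apply {n : ℕ} (i : Fin n) (k : Fin (n + 1)) :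
    T.wt ((Equiv.swap i.castSucc i.succ k : ℕ) + 1) = (T.benderKnuth i).wt ((k : ℕ) + 1) := by
  rcases eq_or_ne k i.castSucc with rfl | hk
  · rw [Equiv.swap_apply_left, Fin.val_succ, Fin.val_castSucc, wt_benderKnuth_low]
  rcases eq_or_ne k i.succ with rfl | hk'
  · rw [Equiv.swap_apply_right, Fin.val_succ, Fin.val_castSucc, wt_benderKnuth_high]
  rw [Equiv.swap_apply_of_ne_of_ne hk hk', wt_benderKnuth_of_ne]
  · exact fun h => hk (Fin.ext (by simp only [Fin.val_castSucc]; omega))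
  · exact fun h => hk' (Fin.ext (by simp only [Fin.val_succ]; omega))

end BenderKnuth

lemma finite_SSYTbdd (lam mu : YoungDiagram) (n : ℕ) : (SSYTbdd lam mu n).Finite := by
  let F : SSYTbdd lam mu n → (skewCells lam mu → Fin (n + 1)) :=
    fun T c => ⟨T.1.entry c.1.1 c.1.2, Nat.lt_succ_of_le (T.2 c.1.1 c.1.2 c.2)⟩
  refine Set.finite_coe_iff.mp (Finite.of_injective F fun T U h => Subtype.ext ?_)
  ext r j
  by_cases hm : (r, j) ∈ skewCells lam mu
  · simpa [F] using congrFun h ⟨(r, j), hm⟩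
  · rw [T.1.zeros' r j hm, U.1.zeros' r j hm]

section Evaluation

variable {R : Type*} [CommSemiring R]

lemma skewSchurEval_eq_sum (lam mu : YoungDiagram) (n : ℕ) (x : Fin n → R) :
    skewSchurEval lam mu n x
      = ∑ T ∈ (finite_SSYTbdd lam mu n).toFinset, ∏ i : Fin n, x i ^ T.wt ((i : ℕ) + 1) :=
  finsum_mem_eq_finite_toFinset_sum _ _

lemma skewSchurEval_comp_swap (lam : YoungDiagram) {n : ℕ} (i : Fin n) (x : Fin (n + 1) → R) :
    skewSchurEval lam ⊥ (n + 1) (x ∘ Equiv.swap i.castSucc i.succ)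
      = skewSchurEval lam ⊥ (n + 1) x := by
  have maps_to (T : SkewSSYT lam ⊥) (hT : T ∈ (finite_SSYTbdd lam ⊥ (n + 1)).toFinset) :
      T.benderKnuth i ∈ (finite_SSYTbdd lam ⊥ (n + 1)).toFinset := by
    rw [Set.Finite.mem_toFinset] at hT ⊢
    exact BenderKnuth.benderKnuth_mem_SSYTbdd (by omega) hT
  rw [skewSchurEval_eq_sum, skewSchurEval_eq_sum]
  refine sum_nbij' (·.benderKnuth i) (·.benderKnuth i) maps_to maps_to (by simp) (by simp)
    fun T _ => ?_
  calc ∏ k, (x ∘ Equiv.swap i.castSucc i.succ) k ^ T.wt ((k : ℕ) + 1)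
      = ∏ k, x k ^ T.wt ((Equiv.swap i.castSucc i.succ k : ℕ) + 1) := by
        rw [← Equiv.prod_comp (Equiv.swap i.castSucc i.succ)
          fun k => x k ^ T.wt ((Equiv.swap i.castSucc i.succ k : ℕ) + 1)]
        simp
    _ = ∏ k, x k ^ (T.benderKnuth i).wt ((k : ℕ) + 1) := by
        simp only [BenderKnuth.wt_swap_apply]

lemma skewSchurEval_comp_perm (lam : YoungDiagram) {n : ℕ} (σ : Equiv.Perm (Fin n))
    (x : Fin n → R) : skewSchurEval lam ⊥ n (x ∘ σ) = skewSchurEval lam ⊥ n x := by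
  cases n with
  | zero => rw [Subsingleton.elim (x ∘ σ) x]
  | succ n =>
    have hσ : σ ∈ Submonoid.closure
        (Set.range fun i : Fin n => Equiv.swap i.castSucc i.succ) := by
      rw [Equiv.Perm.mclosure_swap_castSucc_succ]
      trivial
    induction hσ using Submonoid.closure_induction generalizing x with
    | mem τ hτ =>
      obtain ⟨i, rfl⟩ := hτ
      exact skewSchurEval_comp_swap lam i x
    | one => rfl
    | mul τ τ' _ _ ih ih' =>
      rw [Equiv.Perm.coe_mul, ← Function.comp_assoc, ih', ih]

lemma skewSchurEval_const_mul (lam : YoungDiagram) {n : ℕ} (c : R) (x : Fin n → R) :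
    skewSchurEval lam ⊥ n (fun i => c * x i) = c ^ lam.card * skewSchurEval lam ⊥ n x := by
  rw [skewSchurEval_eq_sum, skewSchurEval_eq_sum, mul_sum]
  refine sum_congr rfl fun T hT => ?_
  rw [← T.sum_wt_eq_card ((Set.Finite.mem_toFinset _).mp hT), ← prod_pow_eq_pow_sum,
    ← prod_mul_distrib]
  simp only [mul_pow]

end Evaluation

lemma skewSchurEval_pow_eq_zero {R : Type*} [CommRing R] [NoZeroDivisors R] (lam : YoungDiagram)
    {n : ℕ} {ζ : R} (hζ : ζ ^ n = 1) (hcard : ζ ^ lam.card ≠ 1) :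
    skewSchurEval lam ⊥ n (fun i => ζ ^ (i : ℕ)) = 0 := by
  have rotate : (fun i : Fin n => ζ ^ (i : ℕ)) ∘ finRotate n = fun i : Fin n => ζ * ζ ^ (i : ℕ) :=
    funext fun i => pow_val_finRotate hζ i
  have fixed := skewSchurEval_comp_perm lam (finRotate n) fun i : Fin n => ζ ^ (i : ℕ)
  rw [rotate, skewSchurEval_const_mul] at fixed
  have : (ζ ^ lam.card - 1) * skewSchurEval lam ⊥ n (fun i => ζ ^ (i : ℕ)) = 0 := by
    rw [sub_mul, fixed, one_mul, sub_self]
  exact (mul_eq_zero.mp this).resolve_left (sub_ne_zero.mpr hcard)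

theorem schur_positive_vanishes_general (m n : ℕ)
    (hgcd : Nat.gcd m n = 1)
    (D : Finset YoungDiagram) (hD : ∀ μ ∈ D, μ.card = m) (d : YoungDiagram → ℕ)
    (f : (Fin n → ℂ) → ℂ)
    (hf : ∀ x : Fin n → ℂ, f x = ∑ μ ∈ D, (d μ : ℂ) * skewSchurEval μ ⊥ n x)
    (ξ : ℂ) (hξ : IsPrimitiveRoot ξ n) :
    ∀ k : ℤ, ¬ (n : ℤ) ∣ k → f (fun i => ξ ^ (((i : ℕ) : ℤ) * k)) = 0 := by
  intro k hk
  have point : (fun i : Fin n => ξ ^ (((i : ℕ) : ℤ) * k)) = fun i : Fin n => (ξ ^ k) ^ (i : ℕ) :=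
    funext fun i => by rw [mul_comm, zpow_mul, zpow_natCast]
  have root : (ξ ^ k) ^ n = 1 := by
    rw [← zpow_natCast, ← zpow_mul, mul_comm, zpow_mul, zpow_natCast, hξ.pow_eq_one, one_zpow]
  have not_root : (ξ ^ k) ^ m ≠ 1 := by
    rw [← zpow_natCast, ← zpow_mul, Ne, hξ.zpow_eq_one_iff_dvd]
    refine fun hdvd => hk (Int.dvd_of_dvd_mul_left_of_gcd_one hdvd ?_)
    rwa [Int.gcd_natCast_natCast, Nat.gcd_comm]
  rw [hf, point]
  refine sum_eq_zero fun μ hμ => ?_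
  rw [skewSchurEval_pow_eq_zero μ root (hD μ hμ ▸ not_root), mul_zero]

/-- If `f` is a nonnegative-integer combination of Schur polynomials `s_λ` over partitions
`λ ⊢ m` (a Schur-positive homogeneous symmetric polynomial of degree `m` in `n` variables),
`gcd(m, n) = 1`, and `ξ` is a primitive `n`-th root of unity, then
`f(1, ξ^k, ξ^{2k}, …, ξ^{(n−1)k}) = 0` for every integer `k` with `n ∤ k`. -/
theorem schur_positive_vanishes (m n : ℕ) (hm : 0 < m) (hn : 0 < n)
    (hgcd : Nat.gcd m n = 1)
    (D : Finset YoungDiagram) (hD : ∀ μ ∈ D, μ.card = m) (d : YoungDiagram → ℕ)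
    (f : (Fin n → ℂ) → ℂ)
    (hf : ∀ x : Fin n → ℂ, f x = ∑ μ ∈ D, (d μ : ℂ) * skewSchurEval μ ⊥ n x)
    (ξ : ℂ) (hξ : IsPrimitiveRoot ξ n) :
    ∀ k : ℤ, ¬ (n : ℤ) ∣ k → f (fun i => ξ ^ (((i : ℕ) : ℤ) * k)) = 0 :=
  schur_positive_vanishes_general m n hgcd D hD d f hf ξ hξ
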